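/- Let V be a complete discrete valuation ring with uniformiser π. Let L be a torsionfree, π-adically complete V-module and let K ⊆ L be a V-submodule such that P := L/K is torsionfree and π-adically complete; let q: L → P be the quotient map. If S ⊆ P is a V-submodule that is compactoid in P, then there exists a V-submodule S̃ ⊆ L that is compactoid in L and satisfies S ⊆ q(S̃). (Part of Proposition 4.6: the quotient map L′ → P′ of modules with the compactoid bornology is a bornological quotient map, i.e., every compactoid subset of P lifts to a compactoid subset of L.) -/

import Mathlib

/-!
Put `Sₖ = π⁻ᵏS`. Because `P` is torsionfree, multiplication by `π` embeds `P/πⁿP` into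
`P/πⁿ⁺¹P`, so each `Sₖ` is again compactoid, and hence `Sₖ ⊆ Nₖ + π Sₖ₊₁` with `Nₖ` finitely
generated. Lift `Nₖ` to finitely generated `Aₖ ⊆ L`. Iterating the decomposition writes any
`s ∈ S` as `s = q(∑_{k<n} πᵏ aₖ) + πⁿ tₙ` with `aₖ ∈ Aₖ`; the series `∑ πᵏ aₖ` converges in the
complete module `L`, its sum maps to `s` because `P` is Hausdorff, and it lies in the `π`-adic
closure of `∑ πᵏ Aₖ`, which is compactoid since each `Aₖ` is finitely generated.
-/

open Pointwise

/-- `S` is a compactoid submodule of `M`: for every `n`, the image of `S` in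
`M/πⁿM` is finitely generated, i.e. there is a finite `Fₙ ⊆ M` with
`S ⊆ V·Fₙ + πⁿ M`. -/
def CompactoidIn {V : Type*} [CommRing V] (π : V) {M : Type*} [AddCommGroup M]
    [Module V M] (S : Submodule V M) : Prop :=
  ∀ n : ℕ, ∃ F : Finset M,
    S ≤ Submodule.span V (F : Set M) ⊔ π ^ n • (⊤ : Submodule V M)

open Submodule

section Modules

variable {V M N : Type*} [CommRing V] [AddCommGroup M] [Module V M] [AddCommGroup N] [Module V N]

theorem Submodule.exists_finset_subset_map_span_eq {f : M →ₗ[V] N} {S : Submodule V M}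
    (h : (S.map f).FG) :
    ∃ F : Finset M, ↑F ⊆ (S : Set M) ∧ (span V (F : Set M)).map f = S.map f := by
  classical
  obtain ⟨T, hT⟩ := h
  have hTS : (T : Set N) ⊆ f '' S := by rw [← map_coe, ← hT]; exact subset_span
  obtain ⟨F, hFS, rfl⟩ := Finset.subset_set_image_iff.1 hTS
  exact ⟨F, hFS, by rw [map_span, ← Finset.coe_image, hT]⟩

theorem Submodule.FG.exists_fg_map_eq {f : M →ₗ[V] N} (hf : Function.Surjective f)
    {S : Submodule V N} (hS : S.FG) : ∃ A : Submodule V M, A.FG ∧ A.map f = S := by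
  rw [← map_comap_eq_of_surjective hf S] at hS ⊢
  obtain ⟨F, -, hF⟩ := exists_finset_subset_map_span_eq hS
  exact ⟨_, fg_span F.finite_toSet, hF⟩

theorem Submodule.span_singleton_pow_smul_top (π : V) (n : ℕ) :
    (Ideal.span {π} ^ n • ⊤ : Submodule V M) = π ^ n • ⊤ := by
  rw [Ideal.span_singleton_pow, ideal_span_singleton_smul]

theorem Submodule.comap_lsmul_pow_succ_smul_top {π : V}
    (hπ : Function.Injective fun x : M => π • x) (n : ℕ) :
    (π ^ (n + 1) • ⊤ : Submodule V M).comap (LinearMap.lsmul V M π) = π ^ n • ⊤ := by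
  ext x
  simp only [mem_comap, LinearMap.lsmul_apply, mem_smul_pointwise_iff_exists, mem_top,
    true_and]
  constructor
  · rintro ⟨y, hy⟩
    exact ⟨y, hπ (by simp only [← hy, pow_succ', mul_smul])⟩
  · rintro ⟨y, rfl⟩
    exact ⟨y, by rw [pow_succ', mul_smul]⟩

theorem IsPrecomplete.exists_smodEq_sum_range {I : Ideal V} [IsPrecomplete I M] {a : ℕ → M}
    (ha : ∀ k, a k ∈ (I ^ k • ⊤ : Submodule V M)) :
    ∃ g : M, ∀ n, ∑ k ∈ Finset.range n, a k ≡ g [SMOD (I ^ n • ⊤ : Submodule V M)] := by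
  refine IsPrecomplete.prec inferInstance fun {m n} hmn => ?_
  rw [SModEq.sub_mem, ← neg_sub, neg_mem_iff, ← Finset.sum_Ico_eq_sub _ hmn]
  exact sum_mem fun k hk => pow_smul_top_le I M (Finset.mem_Ico.1 hk).1 (ha k)

end Modules

section Compactoid

variable {V M : Type*} [CommRing V] [IsNoetherianRing V] [AddCommGroup M] [Module V M]
  {π : V} {S : Submodule V M}

theorem compactoidIn_iff_fg_map_mkQ :
    CompactoidIn π S ↔ ∀ n, (S.map (π ^ n • ⊤ : Submodule V M).mkQ).FG := by
  refine forall_congr' fun n => ⟨fun ⟨F, hF⟩ => ?_, fun h => ?_⟩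
  · refine ((fg_span F.finite_toSet).map (π ^ n • ⊤ : Submodule V M).mkQ).of_le
      ((map_mono hF).trans ?_)
    rw [Submodule.map_sup, mkQ_map_self, sup_bot_eq]
  · obtain ⟨F, -, hF⟩ := exists_finset_subset_map_span_eq h
    refine ⟨F, (le_comap_map (π ^ n • ⊤ : Submodule V M).mkQ S).trans ?_⟩
    rw [← hF, comap_map_mkQ, sup_comm]

theorem CompactoidIn.comap_lsmul (hπ : Function.Injective fun x : M => π • x)
    (hS : CompactoidIn π S) : CompactoidIn π (S.comap (LinearMap.lsmul V M π)) := by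
  rw [compactoidIn_iff_fg_map_mkQ] at hS ⊢
  intro n
  let φ := mapQ _ _ (LinearMap.lsmul V M π) (comap_lsmul_pow_succ_smul_top hπ n).ge
  have hφ : Function.Injective φ := by
    rw [← LinearMap.ker_eq_bot, ker_mapQ, comap_lsmul_pow_succ_smul_top hπ n, mkQ_map_self]
  refine fg_of_fg_map_injective φ hφ ((hS (n + 1)).of_le ?_)
  rw [← map_comp, mapQ_mkQ, map_comp]
  exact map_mono (map_comap_le _ _)

theorem CompactoidIn.exists_fg_le_sup_smul_comap (hS : CompactoidIn π S) :
    ∃ N : Submodule V M, N.FG ∧ S ≤ N ⊔ π • S.comap (LinearMap.lsmul V M π) := by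
  obtain ⟨F, hFS, hF⟩ := exists_finset_subset_map_span_eq (compactoidIn_iff_fg_map_mkQ.1 hS 1)
  refine ⟨_, fg_span F.finite_toSet, fun s hs => ?_⟩
  have hs' : s ∈ (π ^ 1 • ⊤ : Submodule V M) ⊔ span V F := by
    rw [← comap_map_mkQ, hF]; exact mem_comap.2 (mem_map_of_mem hs)
  obtain ⟨z, hz, y, hy, rfl⟩ := mem_sup.1 hs'
  rw [pow_one] at hz
  obtain ⟨w, -, rfl⟩ := (mem_smul_pointwise_iff_exists _ _ _).1 hz
  have hwS : π • w ∈ S := by simpa using sub_mem hs (span_le.2 hFS hy)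
  rw [add_comm]
  exact add_mem (mem_sup_left hy) (mem_sup_right (smul_mem_pointwise_smul w π _ hwS))

end Compactoid

section SeriesLifting

variable {V L P : Type*} [CommRing V] [AddCommGroup L] [Module V L] [AddCommGroup P] [Module V P]

/-- The `π`-adic closure of `⨆ k, π ^ k • A k`. -/
def Submodule.seriesClosure (π : V) (A : ℕ → Submodule V L) : Submodule V L :=
  ⨅ n, (⨆ k ∈ Finset.range n, π ^ k • A k) ⊔ π ^ n • ⊤

theorem compactoidIn_seriesClosure {π : V} {A : ℕ → Submodule V L} (hA : ∀ k, (A k).FG) :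
    CompactoidIn π (seriesClosure π A) := fun n => by
  obtain ⟨F, hF⟩ := fg_biSup (Finset.range n) (fun k => π ^ k • A k) fun k _ => (hA k).map _
  exact ⟨F, hF ▸ iInf_le _ n⟩

variable {f : L →ₗ[V] P} {π : V} {A : ℕ → Submodule V L} {T : ℕ → Submodule V P}

theorem exists_seq_sub_map_sum_mem_pow_smul (hT : ∀ k, T k ≤ (A k).map f ⊔ π • T (k + 1))
    {s : P} (hs : s ∈ T 0) :
    ∃ x : ℕ → L, (∀ k, x k ∈ A k) ∧
      ∀ n, s - f (∑ k ∈ Finset.range n, π ^ k • x k) ∈ π ^ n • (⊤ : Submodule V P) := by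
  have step : ∀ k (t : T k), ∃ (x : A k) (t' : T (k + 1)), (t : P) = f x + π • (t' : P) := by
    rintro k ⟨t, ht⟩
    obtain ⟨_, ⟨x, hx, rfl⟩, _, hz, h⟩ := mem_sup.1 (hT k ht)
    obtain ⟨t', ht', rfl⟩ := (mem_smul_pointwise_iff_exists _ _ _).1 hz
    exact ⟨⟨x, hx⟩, ⟨t', ht'⟩, h.symm⟩
  choose x t' hxt' using step
  let t : ∀ k, T k := fun k => Nat.rec ⟨s, hs⟩ (fun k tk => t' k tk) k
  refine ⟨fun k => x k (t k), fun k => (x k (t k)).2, fun n => ?_⟩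
  suffices h : s - f (∑ k ∈ Finset.range n, π ^ k • (x k (t k) : L)) = π ^ n • (t n).1 by
    rw [h]; exact smul_mem_pointwise_smul _ _ _ mem_top
  induction n with
  | zero => simp [t]
  | succ n ih =>
    rw [Finset.sum_range_succ, map_add, ← sub_sub, ih, hxt' n (t n), map_smul]
    simp only [t]
    module

theorem le_map_seriesClosure [IsPrecomplete (Ideal.span {π}) L]
    [IsHausdorff (Ideal.span {π}) P] (hT : ∀ k, T k ≤ (A k).map f ⊔ π • T (k + 1)) :
    T 0 ≤ (seriesClosure π A).map f := by
  intro s hs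
  obtain ⟨x, hxA, hx⟩ := exists_seq_sub_map_sum_mem_pow_smul hT hs
  obtain ⟨g, hg⟩ := IsPrecomplete.exists_smodEq_sum_range (I := Ideal.span {π})
    (a := fun k => π ^ k • x k) fun k =>
      smul_mem_smul (Ideal.pow_mem_pow (Ideal.mem_span_singleton_self π) k) mem_top
  simp only [span_singleton_pow_smul_top, SModEq.sub_mem] at hg
  refine ⟨g, (mem_iInf _).2 fun n => ?_,
    (IsHausdorff.eq_iff_smodEq (I := Ideal.span {π})).2 fun n => ?_⟩
  · have hu : ∑ k ∈ Finset.range n, π ^ k • x k ∈ ⨆ k ∈ Finset.range n, π ^ k • A k :=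
      sum_mem_biSup fun k _ => smul_mem_pointwise_smul _ _ _ (hxA k)
    simpa using add_mem (mem_sup_left hu) (mem_sup_right (neg_mem (hg n)))
  · obtain ⟨w, -, hw⟩ := (mem_smul_pointwise_iff_exists _ _ _).1 (hg n)
    obtain ⟨v, -, hv⟩ := (mem_smul_pointwise_iff_exists _ _ _).1 (hx n)
    have : f g - s = π ^ n • (-f w - v) := by
      rw [smul_sub, smul_neg, ← map_smul, hw, hv, map_sub]; abel
    rw [span_singleton_pow_smul_top, SModEq.sub_mem, this]
    exact smul_mem_pointwise_smul _ _ _ mem_top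

end SeriesLifting

theorem compactoidIn_lifts_along_quotient_general
    {V : Type*} [CommRing V] [IsDomain V] [IsDiscreteValuationRing V]
    (π : V)
    {L : Type*} [AddCommGroup L] [Module V L]
    [IsAdicComplete (Ideal.span {π}) L]
    (K : Submodule V L)
    (htfP : Function.Injective (fun x : L ⧸ K => π • x))
    [IsAdicComplete (Ideal.span {π}) (L ⧸ K)]
    (S : Submodule V (L ⧸ K)) (hS : CompactoidIn π S) :
    ∃ St : Submodule V L, CompactoidIn π St ∧ S ≤ St.map K.mkQ := by
  let T : ℕ → Submodule V (L ⧸ K) := fun k =>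
    (fun U => U.comap (LinearMap.lsmul V (L ⧸ K) π))^[k] S
  have hT_succ : ∀ k, T (k + 1) = (T k).comap (LinearMap.lsmul V (L ⧸ K) π) := fun k =>
    Function.iterate_succ_apply' _ k S
  have hT : ∀ k, CompactoidIn π (T k) := by
    intro k
    induction k with
    | zero => exact hS
    | succ k ih => rw [hT_succ]; exact ih.comap_lsmul htfP
  have hstep : ∀ k, ∃ A : Submodule V L, A.FG ∧ T k ≤ A.map K.mkQ ⊔ π • T (k + 1) := by
    intro k
    obtain ⟨N, hNfg, hN⟩ := (hT k).exists_fg_le_sup_smul_comap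
    obtain ⟨A, hAfg, rfl⟩ := hNfg.exists_fg_map_eq K.mkQ_surjective
    exact ⟨A, hAfg, hT_succ k ▸ hN⟩
  choose A hAfg hA using hstep
  exact ⟨seriesClosure π A, compactoidIn_seriesClosure hAfg, le_map_seriesClosure hA⟩

/-- Part of Proposition 4.6 (`L' → P'` is a bornological quotient map): let `L` be a
torsionfree, `π`-adically complete module over a complete discrete valuation ring and
`K ⊆ L` a submodule such that `P = L/K` is torsionfree and `π`-adically complete.
Then every compactoid submodule `S` of `P` is contained in the image of a compactoid
submodule `S̃` of `L` under the quotient map. -/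
theorem compactoidIn_lifts_along_quotient
    {V : Type*} [CommRing V] [IsDomain V] [IsDiscreteValuationRing V]
    (π : V) (hπ : Irreducible π) [IsAdicComplete (Ideal.span {π}) V]
    {L : Type*} [AddCommGroup L] [Module V L]
    (htfL : Function.Injective (fun x : L => π • x))
    [IsAdicComplete (Ideal.span {π}) L]
    (K : Submodule V L)
    (htfP : Function.Injective (fun x : L ⧸ K => π • x))
    [IsAdicComplete (Ideal.span {π}) (L ⧸ K)]
    (S : Submodule V (L ⧸ K)) (hS : CompactoidIn π S) :
    ∃ St : Submodule V L, CompactoidIn π St ∧ S ≤ St.map K.mkQ :=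
  compactoidIn_lifts_along_quotient_general π K htfP S hS
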